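/- Let (M,φ,g) be a 2k-dimensional anti-paraKähler manifold with δ ≠ 0, (TM,g_BS) its tangent bundle with the Berger type deformed Sasaki metric and (TM,g_S) its tangent bundle with the Sasaki metric. The identity map I : (TM,g_BS) → (TM,g_S) cannot be totally geodesic. -/

import Mathlib

/-!
A local-coordinate formalization (in a global chart `ℝⁿ`, `n = 2k`) of the
geometry of the tangent bundle of an anti-paraKähler manifold `(M, φ, g)`
endowed with the Berger type deformed Sasaki metric `g_BS`.
-/

open scoped BigOperators
open Matrix

namespace BergerSasaki

variable {n : ℕ}

/-- Partial derivative `∂/∂xⁱ` of a real function on the chart `ℝⁿ`. -/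
noncomputable def pd (i : Fin n) (f : (Fin n → ℝ) → ℝ) (x : Fin n → ℝ) : ℝ :=
  fderiv ℝ f x (Pi.single i 1)

/-- The local data of an almost anti-paraHermitian manifold in a global chart `ℝⁿ`:
a Riemannian metric `g` and an almost paracomplex structure `phi` (`phi ∘ phi = id`;
the two eigenbundles for the eigenvalues `±1` have the same rank, i.e. `phi` is
trace free), such that `g(phi X, phi Y) = g(X , Y)`. -/
structure PreData (n : ℕ) where
  g : (Fin n → ℝ) → Matrix (Fin n) (Fin n) ℝ
  phi : (Fin n → ℝ) → Matrix (Fin n) (Fin n) ℝ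
  g_smooth : ∀ i j, ContDiff ℝ (⊤ : ℕ∞) fun x => g x i j
  phi_smooth : ∀ i j, ContDiff ℝ (⊤ : ℕ∞) fun x => phi x i j
  g_symm : ∀ x, (g x).IsSymm
  g_posdef : ∀ x, (g x).PosDef
  phi_sq : ∀ x, phi x * phi x = 1
  phi_trace : ∀ x, (phi x).trace = 0
  compat : ∀ x, (phi x)ᵀ * g x * phi x = g x

/-- Christoffel symbols `Γ^h_{ij}` of the Levi-Civita connection `∇` of `D.g`. -/
noncomputable def Gamma (D : PreData n) (x : Fin n → ℝ) (i j h : Fin n) : ℝ :=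
  (1 / 2) * ∑ l, (D.g x)⁻¹ h l *
    (pd i (fun y => D.g y j l) x + pd j (fun y => D.g y i l) x - pd l (fun y => D.g y i j) x)

/-- Local components `R_{ijl}{}^h` of the Riemann curvature tensor of `∇`. -/
noncomputable def Riem (D : PreData n) (x : Fin n → ℝ) (i j l h : Fin n) : ℝ :=
  pd i (fun y => Gamma D y j l h) x - pd j (fun y => Gamma D y i l h) x
    + ∑ m, Gamma D x j l m * Gamma D x i m h - ∑ m, Gamma D x i l m * Gamma D x j m h

/-- The anti-paraKähler condition `∇ φ = 0`, in local components. -/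
def IsAntiParaKahler (D : PreData n) : Prop :=
  ∀ x i j h,
    pd i (fun y => D.phi y h j) x + ∑ m, Gamma D x i m h * D.phi x m j
      - ∑ m, Gamma D x i j m * D.phi x h m = 0

/-- Points of the induced chart of the tangent bundle `TM`: a pair
`(x, u)` of a base point and a fibre coordinate. -/
abbrev TMpt (n : ℕ) := (Fin n → ℝ) × (Fin n → ℝ)

/-- Index set for the induced coordinates on `TM`: `Sum.inl i ↔ xⁱ`, `Sum.inr i ↔ uⁱ`. -/
abbrev Idx (n : ℕ) := Fin n ⊕ Fin n

/-- Natural components of a point/vector of the tangent bundle chart. -/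
def comp (p : TMpt n) : Idx n → ℝ := Sum.elim p.1 p.2

/-- The natural coordinate basis vectors of the tangent bundle chart. -/
noncomputable def ebase (a : Idx n) : TMpt n :=
  Sum.elim (fun i => (Pi.single i 1, 0)) (fun i => (0, Pi.single i 1)) a

/-- Partial derivatives on the tangent bundle chart. -/
noncomputable def pdT (a : Idx n) (f : TMpt n → ℝ) (p : TMpt n) : ℝ :=
  fderiv ℝ f p (ebase a)

/-- `Γ_{i0}{}^h = u^m Γ^h_{im}` (the index `0` denotes contraction with `u`). -/
noncomputable def Gamma0 (D : PreData n) (p : TMpt n) (i h : Fin n) : ℝ :=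
  ∑ m, Gamma D p.1 i m h * p.2 m

/-- Natural components of the adapted frame: `aframe D (Sum.inl i)` is the horizontal
frame field `E_i = ∂/∂xⁱ - Γ_{i0}{}^h ∂/∂u^h`, and `aframe D (Sum.inr i)` is the
vertical frame field `E_ī = ∂/∂uⁱ`. -/
noncomputable def aframe (D : PreData n) (a : Idx n) (p : TMpt n) : Idx n → ℝ :=
  Sum.elim
    (fun i => Sum.elim (fun h => if h = i then (1 : ℝ) else 0) (fun h => - Gamma0 D p i h))
    (fun i => Sum.elim (fun _ => (0 : ℝ)) (fun h => if h = i then 1 else 0)) a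

/-- The matrix expressing adapted components in terms of natural components
(the inverse of the frame matrix of `aframe`). -/
noncomputable def Bmat (D : PreData n) (p : TMpt n) : Matrix (Idx n) (Idx n) ℝ :=
  fun a b =>
    Sum.elim
      (fun h => Sum.elim (fun i => if h = i then (1 : ℝ) else 0) (fun _ => 0) b)
      (fun h => Sum.elim (fun i => Gamma0 D p i h) (fun i => if h = i then 1 else 0) b) a

/-- The lowered vector `w_i = φ^m_i g_{m0}`, i.e. `g(∂_i, φ u)`. -/
noncomputable def wvec (D : PreData n) (p : TMpt n) (i : Fin n) : ℝ :=
  ∑ m, D.phi p.1 m i * (∑ l, D.g p.1 m l * p.2 l)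

/-- The Berger type deformed Sasaki metric in the adapted frame:
block diagonal with blocks `g_{ij}` and `g_{ij} + δ² g(∂_i, φu) g(∂_j, φu)`. -/
noncomputable def gBSad (D : PreData n) (δ : ℝ) (p : TMpt n) : Matrix (Idx n) (Idx n) ℝ :=
  fun a b =>
    Sum.elim
      (fun i => Sum.elim (fun j => D.g p.1 i j) (fun _ => (0 : ℝ)) b)
      (fun i => Sum.elim (fun _ => (0 : ℝ))
        (fun j => D.g p.1 i j + δ ^ 2 * wvec D p i * wvec D p j) b) a

/-- The Berger type deformed Sasaki metric `g_BS` in the natural coordinates of `TM`. -/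
noncomputable def gBS (D : PreData n) (δ : ℝ) (p : TMpt n) : Matrix (Idx n) (Idx n) ℝ :=
  (Bmat D p)ᵀ * gBSad D δ p * Bmat D p

/-- The Sasaki metric `g_S` in the natural coordinates of `TM` (the case `δ = 0`). -/
noncomputable def gS (D : PreData n) (p : TMpt n) : Matrix (Idx n) (Idx n) ℝ :=
  gBS D 0 p

/-- Christoffel symbols of (the Levi-Civita connection of) a metric `G` on the
tangent bundle chart, in natural coordinates. -/
noncomputable def GammaT (G : TMpt n → Matrix (Idx n) (Idx n) ℝ) (p : TMpt n)
    (a b c : Idx n) : ℝ :=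
  (1 / 2) * ∑ d, (G p)⁻¹ c d *
    (pdT a (fun q => G q b d) p + pdT b (fun q => G q a d) p - pdT d (fun q => G q a b) p)

/-- Covariant derivative (w.r.t. the Levi-Civita connection of `G`) of a vector field `Y`
on `TM` in the direction of a vector field `X`, in natural components. -/
noncomputable def covT (G : TMpt n → Matrix (Idx n) (Idx n) ℝ)
    (X Y : TMpt n → Idx n → ℝ) (p : TMpt n) (c : Idx n) : ℝ :=
  ∑ a, X p a * pdT a (fun q => Y q c) p + ∑ a, ∑ b, GammaT G p a b c * X p a * Y p b

/-- `R^{h·}_{·jki} = R_{ljk}{}^s g^{lh} g_{si}`. -/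
noncomputable def Rup (D : PreData n) (x : Fin n → ℝ) (j k i h : Fin n) : ℝ :=
  ∑ l, ∑ s, Riem D x l j k s * (D.g x)⁻¹ l h * D.g x s i

/-- `R^{h·}_{·j0i} = R_{lj0}{}^s g^{lh} g_{si}`, the index `0` contracted with `u`. -/
noncomputable def Rstar (D : PreData n) (x u : Fin n → ℝ) (j i h : Fin n) : ℝ :=
  ∑ l, ∑ s, (∑ m, Riem D x l j m s * u m) * (D.g x)⁻¹ l h * D.g x s i

/-- Second fundamental form (formula (5)), in natural coordinates, of a map `f` from the
tangent bundle chart (source metric `G`) to the base chart, with target Christoffel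
symbols `Γt`. -/
noncomputable def betaTM2M (G : TMpt n → Matrix (Idx n) (Idx n) ℝ)
    (Γt : (Fin n → ℝ) → Fin n → Fin n → Fin n → ℝ) (f : TMpt n → Fin n → ℝ)
    (p : TMpt n) (a b : Idx n) (h : Fin n) : ℝ :=
  pdT a (fun q => pdT b (fun r => f r h) q) p
    - ∑ c, GammaT G p a b c * pdT c (fun r => f r h) p
    + ∑ i, ∑ j, Γt (f p) i j h * pdT a (fun r => f r i) p * pdT b (fun r => f r j) p

/-- Second fundamental form of a map `f` of the base chart to itself, with source
metric `Gsrc.g` and target Christoffel symbols `Γt`. -/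
noncomputable def betaM2M (Gsrc : PreData n)
    (Γt : (Fin n → ℝ) → Fin n → Fin n → Fin n → ℝ) (f : (Fin n → ℝ) → Fin n → ℝ)
    (x : Fin n → ℝ) (i j h : Fin n) : ℝ :=
  pd i (fun y => pd j (fun z => f z h) y) x
    - ∑ m, Gamma Gsrc x i j m * pd m (fun z => f z h) x
    + ∑ a, ∑ b, Γt (f x) a b h * pd i (fun z => f z a) x * pd j (fun z => f z b) x

/-- Natural components of the map `ξ : M → TM`, `x ↦ (x, ξ(x))`, determined by a
vector field `ξ` on `M`. -/
def ximap (ξ : (Fin n → ℝ) → Fin n → ℝ) (x : Fin n → ℝ) : Idx n → ℝ :=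
  Sum.elim x (ξ x)

/-- A vector field `ξ`, regarded as the map `ξ : (M, g) → (TM, g_BS)`, is an isometric
immersion: the pullback of `g_BS` under `x ↦ (x, ξ(x))` equals `g`. -/
def IsIsometricImmersion (D : PreData n) (δ : ℝ) (ξ : (Fin n → ℝ) → Fin n → ℝ) : Prop :=
  ∀ x i j, (∑ a, ∑ b, pd i (fun y => ximap ξ y a) x * pd j (fun y => ximap ξ y b) x *
      gBS D δ (x, ξ x) a b) = D.g x i j

/-- Covariant derivative `∇_i ξ^h` of a vector field. -/
noncomputable def nabla (D : PreData n) (ξ : (Fin n → ℝ) → Fin n → ℝ)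
    (x : Fin n → ℝ) (i h : Fin n) : ℝ :=
  pd i (fun y => ξ y h) x + ∑ m, Gamma D x i m h * ξ x m

/-- Second covariant derivative `∇_i ∇_j ξ^h` of a vector field. -/
noncomputable def nabla2 (D : PreData n) (ξ : (Fin n → ℝ) → Fin n → ℝ)
    (x : Fin n → ℝ) (i j h : Fin n) : ℝ :=
  pd i (fun y => nabla D ξ y j h) x + ∑ m, Gamma D x i m h * nabla D ξ x j m
    - ∑ m, Gamma D x i j m * nabla D ξ x m h

/-- The coefficient `A^h_{mn} = (δ²/(1+δ²)) φ^k_n φ^h_0 g_{mk}` (index `0` contracted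
with the fibre coordinate `u`). -/
noncomputable def Acoef (D : PreData n) (δ : ℝ) (x u : Fin n → ℝ) (m nn h : Fin n) : ℝ :=
  δ ^ 2 / (1 + δ ^ 2) * ∑ l, D.phi x l nn * (∑ r, D.phi x h r * u r) * D.g x m l

/-- Second fundamental form of the map `ξ : (M, g) → (TM, g_BS)`, `x ↦ (x, ξ(x))`,
in natural components. -/
noncomputable def betaM2TM (D : PreData n) (δ : ℝ) (ξ : (Fin n → ℝ) → Fin n → ℝ)
    (x : Fin n → ℝ) (i j : Fin n) (c : Idx n) : ℝ :=
  pd i (fun y => pd j (fun z => ximap ξ z c) y) x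
    - ∑ m, Gamma D x i j m * pd m (fun z => ximap ξ z c) x
    + ∑ a, ∑ b, GammaT (gBS D δ) (x, ξ x) a b c *
        pd i (fun z => ximap ξ z a) x * pd j (fun z => ximap ξ z b) x

/-- Second fundamental form, in natural coordinates, of a map `f : TM → TM`, the source
carrying a metric `G` and the target a (torsion-free) linear connection with
coefficients `Γt`. -/
noncomputable def betaTM2TM (G : TMpt n → Matrix (Idx n) (Idx n) ℝ)
    (Γt : TMpt n → Idx n → Idx n → Idx n → ℝ) (f : TMpt n → TMpt n)
    (p : TMpt n) (a b c : Idx n) : ℝ :=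
  pdT a (fun q => pdT b (fun r => comp (f r) c) q) p
    - ∑ d, GammaT G p a b d * pdT d (fun r => comp (f r) c) p
    + ∑ d, ∑ e, Γt (f p) d e c *
        pdT a (fun r => comp (f r) d) p * pdT b (fun r => comp (f r) e) p

/-- Horizontal projection (w.r.t. the horizontal distribution of `∇`) of a tangent
vector of `TM`, in natural components. -/
noncomputable def hproj (D : PreData n) (p : TMpt n) (v : Idx n → ℝ) : Idx n → ℝ :=
  fun c => ∑ i, v (Sum.inl i) * aframe D (Sum.inl i) p c

/-- Vertical projection of a tangent vector of `TM`, in natural components. -/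
noncomputable def vproj (D : PreData n) (p : TMpt n) (v : Idx n → ℝ) : Idx n → ℝ :=
  fun c => v c - hproj D p v c

/-- The Schouten-Van Kampen connection associated with the Levi-Civita connection of
`g_BS`:  `∇̃_X Y = V(∇_X (V Y)) + H(∇_X (H Y))`. -/
noncomputable def svk (D : PreData n) (δ : ℝ) (X Y : TMpt n → Idx n → ℝ)
    (p : TMpt n) (c : Idx n) : ℝ :=
  vproj D p (covT (gBS D δ) X (fun q => vproj D q (Y q)) p) c
    + hproj D p (covT (gBS D δ) X (fun q => hproj D q (Y q)) p) c

/-- Lie bracket of vector fields on the tangent bundle chart, in natural components. -/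
noncomputable def lieBracketT (X Y : TMpt n → Idx n → ℝ) (p : TMpt n) (c : Idx n) : ℝ :=
  ∑ a, X p a * pdT a (fun q => Y q c) p - ∑ a, Y p a * pdT a (fun q => X q c) p

/-- Torsion tensor `T(X,Y) = ∇_X Y - ∇_Y X - [X,Y]` of a connection (given as an
operator on vector fields) on the tangent bundle chart. -/
noncomputable def torsionOf
    (Conn : (TMpt n → Idx n → ℝ) → (TMpt n → Idx n → ℝ) → TMpt n → Idx n → ℝ)
    (X Y : TMpt n → Idx n → ℝ) (p : TMpt n) (c : Idx n) : ℝ :=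
  Conn X Y p c - Conn Y X p c - lieBracketT X Y p c

/-- The mean connection `∇ᵐ = ∇̃ - ½ T` of the Schouten-Van Kampen connection `∇̃`. -/
noncomputable def meanConn (D : PreData n) (δ : ℝ) (X Y : TMpt n → Idx n → ℝ)
    (p : TMpt n) (c : Idx n) : ℝ :=
  svk D δ X Y p c - (1 / 2) * torsionOf (svk D δ) X Y p c

/-- The constant coordinate vector field `∂/∂x^a` on the tangent bundle chart. -/
def natE (a : Idx n) : TMpt n → Idx n → ℝ := fun _ c => if c = a then 1 else 0

end BergerSasaki

/-!
If the identity `(TM, g_BS) → (TM, g_S)` were totally geodesic, `g_BS` and `g_S` would have the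
same Levi-Civita connection, so both would be parallel for it. Along any line of the chart of
`TM` their difference then solves a linear ODE; it vanishes on the zero section, so by Grönwall
it vanishes everywhere. But the vertical block of `g_BS - g_S` is `δ² w ⊗ w` with
`w = g(·, φu)`, and `w ≠ 0` for `u ≠ 0` because `g` and `φ` are invertible.
-/

section Calculus

variable {X : Type*} [NormedAddCommGroup X] [NormedSpace ℝ X]
  {m : Type*} [Fintype m] [DecidableEq m]

lemma contDiff_det {M : X → Matrix m m ℝ} (hM : ∀ i j, ContDiff ℝ (⊤ : ℕ∞) fun x => M x i j) :
    ContDiff ℝ (⊤ : ℕ∞) fun x => (M x).det := by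
  simp only [Matrix.det_apply']
  exact ContDiff.sum fun σ _ => contDiff_const.mul (contDiff_prod fun i _ => hM (σ i) i)

lemma contDiff_inv_apply {M : X → Matrix m m ℝ}
    (hM : ∀ i j, ContDiff ℝ (⊤ : ℕ∞) fun x => M x i j) (hdet : ∀ x, (M x).det ≠ 0) (i j : m) :
    ContDiff ℝ (⊤ : ℕ∞) fun x => (M x)⁻¹ i j := by
  simp only [Matrix.inv_def, Matrix.smul_apply, Ring.inverse_eq_inv', smul_eq_mul,
    Matrix.adjugate_apply]
  refine ((contDiff_det hM).inv hdet).mul (contDiff_det fun r s => ?_)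
  rcases eq_or_ne r j with rfl | hr
  · simpa [Matrix.updateRow_apply] using contDiff_const
  · simpa [Matrix.updateRow_apply, hr] using hM r s

lemma contDiff_fderiv_apply_const {f : X → ℝ} (hf : ContDiff ℝ (⊤ : ℕ∞) f) (v : X) :
    ContDiff ℝ (⊤ : ℕ∞) fun x => fderiv ℝ f x v :=
  (hf.fderiv_right (by simp)).clm_apply contDiff_const

end Calculus

section LinearODE

variable {ι : Type*} [Fintype ι]

lemma abs_sum_mul_apply_le (α : ι → ℝ) (y : ι → ι → ℝ) (e : ι) :
    |∑ c, α c * y c e| ≤ (∑ c, |α c|) * ‖y‖ := by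
  rw [Finset.sum_mul]
  refine (Finset.abs_sum_le_sum_abs _ _).trans (Finset.sum_le_sum fun c _ => ?_)
  rw [abs_mul, ← Real.norm_eq_abs (y c e)]
  gcongr
  exact (norm_le_pi_norm (y c) e).trans (norm_le_pi_norm y c)

lemma eq_zero_of_hasDerivAt_sum_mul {F A : ℝ → ι → ι → ℝ}
    (hA : ∀ b c, Continuous fun t => A t b c)
    (hF : ∀ t, HasDerivAt F (fun b e => ∑ c, A t b c * F t c e + ∑ c, A t e c * F t c b) t)
    (h0 : F 0 = 0) : F 1 = 0 := by
  set S : ℝ → ℝ := fun t => ∑ b, ∑ c, |A t b c|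
  have hS : Continuous S := by fun_prop
  obtain ⟨C, hC⟩ := (isCompact_Icc (a := (0 : ℝ)) (b := 1)).exists_bound_of_continuousOn
    hS.continuousOn
  have hrow : ∀ t b, ∑ c, |A t b c| ≤ S t := fun t b =>
    Finset.single_le_sum (f := fun b => ∑ c, |A t b c|)
      (fun b _ => Finset.sum_nonneg fun c _ => abs_nonneg _) (Finset.mem_univ b)
  refine eq_zero_of_abs_deriv_le_mul_abs_self_of_eq_zero_right (K := 2 * C)
    (fun t _ => (hF t).continuousAt.continuousWithinAt) (fun t _ => (hF t).hasDerivWithinAt) h0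
    (fun t ht => ?_) 1 ⟨zero_le_one, le_rfl⟩
  have hSC : S t ≤ C := (le_abs_self _).trans (hC t (Set.Ico_subset_Icc_self ht))
  have hC0 : 0 ≤ C := (norm_nonneg _).trans (hC t (Set.Ico_subset_Icc_self ht))
  refine (pi_norm_le_iff_of_nonneg (by positivity)).2 fun b =>
    (pi_norm_le_iff_of_nonneg (by positivity)).2 fun e => ?_
  rw [Real.norm_eq_abs]
  calc |∑ c, A t b c * F t c e + ∑ c, A t e c * F t c b|
      ≤ |∑ c, A t b c * F t c e| + |∑ c, A t e c * F t c b| := abs_add_le _ _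
    _ ≤ S t * ‖F t‖ + S t * ‖F t‖ := by
      gcongr
      · exact (abs_sum_mul_apply_le _ _ _).trans (by gcongr; exact hrow t b)
      · exact (abs_sum_mul_apply_le _ _ _).trans (by gcongr; exact hrow t e)
    _ ≤ 2 * C * ‖F t‖ := by nlinarith [norm_nonneg (F t)]

end LinearODE

namespace BergerSasaki

open Matrix

variable {n : ℕ}

section Smoothness

variable (D : PreData n)

lemma contDiff_Gamma (i j h : Fin n) : ContDiff ℝ (⊤ : ℕ∞) fun x => Gamma D x i j h := by
  have hdet : ∀ x, (D.g x).det ≠ 0 := fun x => (D.g_posdef x).det_pos.ne'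
  refine contDiff_const.mul (ContDiff.sum fun l _ =>
    (contDiff_inv_apply D.g_smooth hdet h l).mul ?_)
  exact ((contDiff_fderiv_apply_const (D.g_smooth j l) _).add
    (contDiff_fderiv_apply_const (D.g_smooth i l) _)).sub
      (contDiff_fderiv_apply_const (D.g_smooth i j) _)

lemma contDiff_snd_apply (i : Fin n) : ContDiff ℝ (⊤ : ℕ∞) fun p : TMpt n => p.2 i :=
  contDiff_pi.mp contDiff_snd i

lemma contDiff_Gamma0 (i h : Fin n) : ContDiff ℝ (⊤ : ℕ∞) fun p : TMpt n => Gamma0 D p i h :=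
  ContDiff.sum fun m _ => ((contDiff_Gamma D i m h).comp contDiff_fst).mul (contDiff_snd_apply m)

lemma contDiff_wvec (i : Fin n) : ContDiff ℝ (⊤ : ℕ∞) fun p : TMpt n => wvec D p i :=
  ContDiff.sum fun m _ => ((D.phi_smooth m i).comp contDiff_fst).mul
    (ContDiff.sum fun l _ => ((D.g_smooth m l).comp contDiff_fst).mul (contDiff_snd_apply l))

lemma contDiff_Bmat (a b : Idx n) : ContDiff ℝ (⊤ : ℕ∞) fun p : TMpt n => Bmat D p a b := by
  rcases a with h | h <;> rcases b with i | i
  · exact contDiff_const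
  · exact contDiff_const
  · exact contDiff_Gamma0 D i h
  · exact contDiff_const

lemma contDiff_gBSad (δ : ℝ) (a b : Idx n) :
    ContDiff ℝ (⊤ : ℕ∞) fun p : TMpt n => gBSad D δ p a b := by
  rcases a with i | i <;> rcases b with j | j
  · exact (D.g_smooth i j).comp contDiff_fst
  · exact contDiff_const
  · exact contDiff_const
  · exact ((D.g_smooth i j).comp contDiff_fst).add
      ((contDiff_const.mul (contDiff_wvec D i)).mul (contDiff_wvec D j))

lemma contDiff_gBS (δ : ℝ) (a b : Idx n) :
    ContDiff ℝ (⊤ : ℕ∞) fun p : TMpt n => gBS D δ p a b := by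
  simp only [gBS, mul_apply, transpose_apply]
  exact ContDiff.sum fun d _ => (ContDiff.sum fun c _ =>
    (contDiff_Bmat D c a).mul (contDiff_gBSad D δ c d)).mul (contDiff_Bmat D d b)

end Smoothness

structure IsPseudoRiemannianMetric (G : TMpt n → Matrix (Idx n) (Idx n) ℝ) : Prop where
  contDiff : ∀ a b, ContDiff ℝ (⊤ : ℕ∞) fun p => G p a b
  isSymm : ∀ p, (G p).IsSymm
  det_ne_zero : ∀ p, (G p).det ≠ 0

section BergerSasakiMetric

variable (D : PreData n)

lemma gBSad_eq_fromBlocks (δ : ℝ) (p : TMpt n) :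
    gBSad D δ p = fromBlocks (D.g p.1) 0 0
      (D.g p.1 + δ ^ 2 • vecMulVec (wvec D p) (wvec D p)) := by
  ext (i | i) (j | j) <;> simp [gBSad, vecMulVec_apply, mul_assoc]

lemma Bmat_eq_fromBlocks (p : TMpt n) :
    Bmat D p = fromBlocks 1 0 (of fun h i => Gamma0 D p i h) 1 := by
  ext (h | h) (i | i) <;> simp [Bmat, one_apply]

lemma gBS_inr_inr (δ : ℝ) (p : TMpt n) (i j : Fin n) :
    gBS D δ p (Sum.inr i) (Sum.inr j) = D.g p.1 i j + δ ^ 2 * wvec D p i * wvec D p j := by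
  simp [gBS, gBSad_eq_fromBlocks, Bmat_eq_fromBlocks, fromBlocks_transpose, fromBlocks_multiply,
    vecMulVec_apply, mul_assoc]

lemma gBS_zero_fiber (δ : ℝ) (x : Fin n → ℝ) : gBS D δ (x, 0) = gS D (x, 0) := by
  have hw : wvec D (x, 0) = 0 := by ext i; simp [wvec]
  simp [gS, gBS, gBSad_eq_fromBlocks, hw]

lemma isPseudoRiemannianMetric_gBS (δ : ℝ) : IsPseudoRiemannianMetric (gBS D δ) where
  contDiff := contDiff_gBS D δ
  isSymm p := by
    have hw : (vecMulVec (wvec D p) (wvec D p)).IsSymm := transpose_vecMulVec _ _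
    have hV := (D.g_symm p.1).add (hw.smul (δ ^ 2))
    have hX : (gBSad D δ p).IsSymm := by
      rw [gBSad_eq_fromBlocks]
      exact (D.g_symm p.1).fromBlocks (by simp) hV
    simp only [gBS, IsSymm, transpose_mul, transpose_transpose, hX.eq, Matrix.mul_assoc]
  det_ne_zero p := by
    have hV : (D.g p.1 + δ ^ 2 • vecMulVec (wvec D p) (wvec D p)).PosDef := by
      refine (D.g_posdef p.1).add_posSemidef ?_
      simpa using (posSemidef_vecMulVec_self_star (wvec D p)).smul (sq_nonneg δ)
    rw [gBS, det_mul, det_mul, det_transpose, Bmat_eq_fromBlocks, gBSad_eq_fromBlocks,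
      det_fromBlocks_zero₁₂, det_fromBlocks_zero₁₂]
    simpa using mul_ne_zero (D.g_posdef p.1).det_pos.ne' hV.det_pos.ne'

end BergerSasakiMetric

section LeviCivita

variable {G : TMpt n → Matrix (Idx n) (Idx n) ℝ}

lemma contDiff_GammaT (hG : IsPseudoRiemannianMetric G) (a b c : Idx n) :
    ContDiff ℝ (⊤ : ℕ∞) fun p => GammaT G p a b c :=
  contDiff_const.mul <| ContDiff.sum fun d _ =>
    (contDiff_inv_apply hG.contDiff hG.det_ne_zero c d).mul
      (((contDiff_fderiv_apply_const (hG.contDiff b d) _).add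
        (contDiff_fderiv_apply_const (hG.contDiff a d) _)).sub
          (contDiff_fderiv_apply_const (hG.contDiff a b) _))

lemma sum_GammaT_mul {p : TMpt n} (hs : (G p).IsSymm) (hd : (G p).det ≠ 0) (a b e : Idx n) :
    ∑ c, GammaT G p a b c * G p c e
      = (1 / 2) * (pdT a (fun q => G q b e) p + pdT b (fun q => G q a e) p
          - pdT e (fun q => G q a b) p) := by
  set K : Idx n → ℝ := fun d =>
    pdT a (fun q => G q b d) p + pdT b (fun q => G q a d) p - pdT d (fun q => G q a b) p
  have hΓ : (fun c => GammaT G p a b c) = (1 / 2 : ℝ) • ((G p)⁻¹ *ᵥ K) := by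
    ext c
    simp [GammaT, K, mulVec, dotProduct]
  have hGΓ : G p *ᵥ (fun c => GammaT G p a b c) = (1 / 2 : ℝ) • K := by
    rw [hΓ, mulVec_smul, mulVec_mulVec, mul_nonsing_inv _ hd.isUnit, one_mulVec]
  calc ∑ c, GammaT G p a b c * G p c e = (G p *ᵥ fun c => GammaT G p a b c) e := by
        simp [mulVec, dotProduct, hs.apply, mul_comm]
    _ = _ := by rw [hGΓ]; rfl

lemma pdT_eq_sum_GammaT_mul (hs : ∀ q, (G q).IsSymm) {p : TMpt n} (hd : (G p).det ≠ 0)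
    (a b e : Idx n) :
    pdT a (fun q => G q b e) p
      = ∑ c, GammaT G p a b c * G p c e + ∑ c, GammaT G p a e c * G p c b := by
  have hsymm : (fun q => G q e b) = fun q => G q b e := funext fun q => (hs q).apply b e
  rw [sum_GammaT_mul (hs p) hd, sum_GammaT_mul (hs p) hd, hsymm]
  ring

end LeviCivita

lemma fderiv_apply_eq_sum_pdT (f : TMpt n → ℝ) (p v : TMpt n) :
    fderiv ℝ f p v = ∑ a, comp v a * pdT a f p := by
  have hv : v = ∑ a, comp v a • ebase a := by
    ext i <;> simp [Fintype.sum_sum_type, comp, ebase, Prod.fst_sum, Prod.snd_sum,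
      Finset.sum_apply, Pi.single_apply]
  conv_lhs => rw [hv]
  simp [pdT]

lemma hasDerivAt_comp_line {f : TMpt n → ℝ} (hf : Differentiable ℝ f) (p v : TMpt n) (t : ℝ) :
    HasDerivAt (fun s : ℝ => f (p + s • v)) (∑ a, comp v a * pdT a f (p + t • v)) t := by
  have hline : HasDerivAt (fun s : ℝ => p + s • v) v t := by
    simpa using ((hasDerivAt_id t).smul_const v).const_add p
  rw [← fderiv_apply_eq_sum_pdT]
  exact (hf _).hasFDerivAt.comp_hasDerivAt t hline

section Uniqueness

variable {G₁ G₂ : TMpt n → Matrix (Idx n) (Idx n) ℝ}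

lemma pdT_sub_pdT_of_GammaT_eq (hG₁ : IsPseudoRiemannianMetric G₁)
    (hG₂ : IsPseudoRiemannianMetric G₂) (hΓ : GammaT G₁ = GammaT G₂) (p : TMpt n) (a b e : Idx n) :
    pdT a (fun q => G₁ q b e) p - pdT a (fun q => G₂ q b e) p
      = ∑ c, GammaT G₁ p a b c * (G₁ p c e - G₂ p c e)
        + ∑ c, GammaT G₁ p a e c * (G₁ p c b - G₂ p c b) := by
  rw [pdT_eq_sum_GammaT_mul hG₁.isSymm (hG₁.det_ne_zero p),
    pdT_eq_sum_GammaT_mul hG₂.isSymm (hG₂.det_ne_zero p), ← hΓ]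
  simp only [mul_sub, Finset.sum_sub_distrib]
  ring

theorem eq_of_GammaT_eq (hG₁ : IsPseudoRiemannianMetric G₁) (hG₂ : IsPseudoRiemannianMetric G₂)
    (hΓ : GammaT G₁ = GammaT G₂) {p : TMpt n} (hp : G₁ p = G₂ p) (q : TMpt n) : G₁ q = G₂ q := by
  set v := q - p
  set F : ℝ → Idx n → Idx n → ℝ := fun t b e => G₁ (p + t • v) b e - G₂ (p + t • v) b e
  set A : ℝ → Idx n → Idx n → ℝ := fun t b c => ∑ a, comp v a * GammaT G₁ (p + t • v) a b c
  have hA : ∀ b c, Continuous fun t => A t b c := fun b c =>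
    continuous_finsetSum _ fun a _ => continuous_const.mul
      ((contDiff_GammaT hG₁ a b c).continuous.comp (by fun_prop))
  have hF : ∀ t, HasDerivAt F
      (fun b e => ∑ c, A t b c * F t c e + ∑ c, A t e c * F t c b) t := by
    intro t
    refine hasDerivAt_pi.2 fun b => hasDerivAt_pi.2 fun e => ?_
    refine ((hasDerivAt_comp_line ((hG₁.contDiff b e).differentiable (by simp)) p v t).sub
      (hasDerivAt_comp_line ((hG₂.contDiff b e).differentiable (by simp)) p v t)).congr_deriv ?_
    simp only [← Finset.sum_sub_distrib, ← mul_sub, pdT_sub_pdT_of_GammaT_eq hG₁ hG₂ hΓ, A, F,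
      mul_add, Finset.sum_add_distrib, Finset.mul_sum, Finset.sum_mul]
    congr 1 <;> rw [Finset.sum_comm] <;> simp only [mul_assoc]
  have h1 := eq_zero_of_hasDerivAt_sum_mul hA hF (by ext b e; simp [F, hp])
  ext b e
  simpa [F, v, sub_eq_zero] using congrFun (congrFun h1 b) e

end Uniqueness

lemma pdT_comp (c d : Idx n) (p : TMpt n) :
    pdT d (fun r => comp r c) p = if c = d then 1 else 0 := by
  let L : TMpt n →L[ℝ] ℝ := Sum.elim
    (fun i => (ContinuousLinearMap.proj i).comp (ContinuousLinearMap.fst ℝ _ _))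
    (fun i => (ContinuousLinearMap.proj i).comp (ContinuousLinearMap.snd ℝ _ _)) c
  have hL : (fun r => comp r c) = L := by rcases c with i | i <;> rfl
  rw [pdT, hL, L.fderiv]
  rcases c with i | i <;> rcases d with j | j <;> simp [L, ebase, Pi.single_apply, eq_comm]

lemma betaTM2TM_id (G : TMpt n → Matrix (Idx n) (Idx n) ℝ)
    (Γt : TMpt n → Idx n → Idx n → Idx n → ℝ) (p : TMpt n) (a b c : Idx n) :
    betaTM2TM G Γt (fun p => p) p a b c = Γt p a b c - GammaT G p a b c := by
  simp only [betaTM2TM, pdT_comp]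
  simp [pdT, sub_eq_neg_add]

section VerticalPart

variable (D : PreData n)

lemma wvec_eq_vecMul (p : TMpt n) : wvec D p = (D.g p.1 *ᵥ p.2) ᵥ* D.phi p.1 := by
  ext i
  simp [wvec, vecMul, mulVec, dotProduct, mul_comm]

lemma wvec_eq_zero_iff (p : TMpt n) : wvec D p = 0 ↔ p.2 = 0 := by
  refine ⟨fun hw => ?_, fun hu => by simp [wvec_eq_vecMul, hu]⟩
  have hgu : D.g p.1 *ᵥ p.2 = 0 := by
    simpa [wvec_eq_vecMul, vecMul_vecMul, D.phi_sq] using congrArg (· ᵥ* D.phi p.1) hw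
  exact eq_zero_of_mulVec_eq_zero (D.g_posdef p.1).det_pos.ne' hgu

lemma fiber_eq_zero_of_gBS_eq_gS {δ : ℝ} (hδ : δ ≠ 0) {p : TMpt n} (h : gBS D δ p = gS D p) :
    p.2 = 0 := by
  rw [← wvec_eq_zero_iff]
  ext j
  have hjj := congrFun (congrFun h (Sum.inr j)) (Sum.inr j)
  rw [gS, gBS_inr_inr, gBS_inr_inr] at hjj
  simpa [hδ] using hjj

end VerticalPart

theorem identity_gBS_to_gS_not_totallyGeodesic_general (k : ℕ) (hk : 0 < k)
    (D : PreData (2 * k)) (δ : ℝ) (hδ : δ ≠ 0) :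
    ¬ (∀ (p : TMpt (2 * k)) (a b c : Idx (2 * k)),
        betaTM2TM (gBS D δ) (GammaT (gS D)) (fun p => p) p a b c = 0) := by
  intro H
  have hΓ : GammaT (gBS D δ) = GammaT (gS D) := by
    funext p a b c
    simpa [betaTM2TM_id, sub_eq_zero, eq_comm] using H p a b c
  have hmetric : ∀ p, gBS D δ p = gS D p :=
    eq_of_GammaT_eq (isPseudoRiemannianMetric_gBS D δ) (isPseudoRiemannianMetric_gBS D 0) hΓ
      (gBS_zero_fiber D δ 0)
  let i₀ : Fin (2 * k) := ⟨0, by omega⟩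
  simpa using congrFun (fiber_eq_zero_of_gBS_eq_gS D hδ (hmetric (0, Pi.single i₀ 1))) i₀

/-- For `δ ≠ 0` (and `M` of positive dimension `2k`), the identity map
`I : (TM, g_BS) → (TM, g_S)` cannot be totally geodesic: its second fundamental form
does not vanish identically. -/
theorem identity_gBS_to_gS_not_totallyGeodesic (k : ℕ) (hk : 0 < k)
    (D : PreData (2 * k)) (hD : IsAntiParaKahler D) (δ : ℝ) (hδ : δ ≠ 0) :
    ¬ (∀ (p : TMpt (2 * k)) (a b c : Idx (2 * k)),
        betaTM2TM (gBS D δ) (GammaT (gS D)) (fun p => p) p a b c = 0) :=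
  identity_gBS_to_gS_not_totallyGeodesic_general k hk D δ hδ

end BergerSasaki
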